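/- arXiv:1801.02509 — 2 statements merged into one kernel-verified Lean document; each statement's English description precedes it below -/
import Mathlib

section
/- Accelerated proximal gradient O(1/k²) rate: With φ convex differentiable with L-Lipschitz gradient, ψ proper closed convex, f = φ+ψ with minimizer set X̄ ≠ ∅ and minimum f̄, the FISTA iteration x_{k+1} = Prox_{1/L}(y_k − (1/L)∇φ(y_k)), y_{k+1} = x_{k+1} + (θ_{k+1}(1−θ_k)/θ_k)(x_{k+1} − x_k) with θ₀ = 1, θ_{k+1}² = θ_k²(1−θ_{k+1}), y₀ = x₀, satisfies f(x_k) − f̄ ≤ 2L·dist(x₀, X̄)²/(k+1)² for all k ≥ 1. -/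
open scoped RealInnerProductSpace

variable {E : Type*} [NormedAddCommGroup E] [InnerProductSpace ℝ E] [FiniteDimensional ℝ E]

/-- Convex conjugate of an extended-real-valued function. -/
noncomputable def conjFn (f : E → EReal) (z : E) : EReal :=
  ⨆ x : E, (((⟪z, x⟫ : ℝ) : EReal) - f x)

/-- Subdifferential of an extended-real-valued function. -/
def SubgradAt (f : E → EReal) (x : E) : Set E :=
  {g : E | ∀ y : E, f x + (((⟪g, y - x⟫ : ℝ)) : EReal) ≤ f y}

/-- Subdifferential of a real-valued function. -/
def RSubgradAt (f : E → ℝ) (x : E) : Set E :=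
  {g : E | ∀ y : E, f x + ⟪g, y - x⟫ ≤ f y}

/-- Convexity for extended-real-valued functions. -/
def EConvex (f : E → EReal) : Prop :=
  ∀ x y : E, ∀ a b : ℝ, 0 ≤ a → 0 ≤ b → a + b = 1 →
    f (a • x + b • y) ≤ ((a : ℝ) : EReal) * f x + ((b : ℝ) : EReal) * f y

/-- Properness of an extended-real-valued function. -/
def ProperFn (f : E → EReal) : Prop := (∃ x, f x ≠ ⊤) ∧ ∀ x, f x ≠ ⊥

/-- `p` is the proximal point `Prox_t(v)` of `ψ`, i.e. a minimizer of
`y ↦ ψ(y) + ‖y - v‖²/(2t)`. -/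
def IsProxPt (ψ : E → EReal) (t : ℝ) (v p : E) : Prop :=
  ∀ y : E, ψ p + ((‖p - v‖^2 / (2*t) : ℝ) : EReal) ≤ ψ y + ((‖y - v‖^2 / (2*t) : ℝ) : EReal)

/-! The iterate `x (k+1)` minimizes `ψ` plus the quadratic upper model of `φ` at `y k`. Strong
convexity of this model, the descent lemma and the gradient inequality give
`f (x (k+1)) + L/2 ‖z - x (k+1)‖² ≤ f z + L/2 ‖z - y k‖²` for every `z` in the domain of `ψ`.
At `z = θ (k+1) x̄ + (1 - θ (k+1)) x (k+1)` the momentum step turns both distances into multiples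
of `‖u - x̄‖`, where `u k = x k + (θ k)⁻¹ (x (k+1) - x k)`, and the recursion for `θ` makes
`(f (x (k+1)) - f x̄) / θ k ^ 2 + L/2 ‖u k - x̄‖²` nonincreasing. With `1 / θ k ≥ (k + 2) / 2` this
bounds `f (x (k+1)) - f x̄` for every `x̄ ∈ X̄`, hence in terms of the distance to `X̄`. -/

open Set Filter Topology

structure IsFistaTheta (θ : ℕ → ℝ) : Prop where
  zero : θ 0 = 1
  succ_mem : ∀ k, θ (k + 1) ∈ Ioc (0 : ℝ) 1
  succ_sq : ∀ k, θ (k + 1) ^ 2 = θ k ^ 2 * (1 - θ (k + 1))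

namespace IsFistaTheta

variable {θ : ℕ → ℝ}

theorem pos (hθ : IsFistaTheta θ) (k : ℕ) : 0 < θ k := by
  cases k with
  | zero => simp [hθ.zero]
  | succ k => exact (hθ.succ_mem k).1

theorem inv_add_half_le (hθ : IsFistaTheta θ) (k : ℕ) : (θ k)⁻¹ + 1 / 2 ≤ (θ (k + 1))⁻¹ := by
  have hs := hθ.pos k
  have ht := hθ.pos (k + 1)
  set a := (θ (k + 1))⁻¹
  set b := (θ k)⁻¹
  have ha : 0 < a := inv_pos.2 ht
  have hb : 0 < b := inv_pos.2 hs
  -- the recursion divided by `θ k ^ 2 * θ (k + 1) ^ 2`; then `(a - 1/2)² = b² + 1/4`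
  have hab : a ^ 2 - a = b ^ 2 := by
    have := hθ.succ_sq k
    simp only [a, b]
    field_simp
    linear_combination -this
  nlinarith [sq_nonneg (a - 1 / 2 - b)]

theorem le_two_div (hθ : IsFistaTheta θ) (k : ℕ) : θ k ≤ 2 / ((k : ℝ) + 2) := by
  have hinv : ((k : ℝ) + 2) / 2 ≤ (θ k)⁻¹ := by
    induction k with
    | zero => simp [hθ.zero]
    | succ k ih =>
      have := hθ.inv_add_half_le k
      push_cast
      linarith
  rw [le_div_iff₀ (by positivity)]
  have := mul_le_mul_of_nonneg_left hinv (hθ.pos k).le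
  rw [mul_inv_cancel₀ (hθ.pos k).ne'] at this
  linarith

end IsFistaTheta

section

variable {V : Type*} [NormedAddCommGroup V]

theorem IsProxPt.ne_top {ψ : V → EReal} {t : ℝ} {v p : V} (hp : IsProxPt ψ t v p)
    (hψ : ∃ w, ψ w ≠ ⊤) : ψ p ≠ ⊤ := by
  obtain ⟨w, hw⟩ := hψ
  intro htop
  have h := hp w
  rw [htop, EReal.top_add_of_ne_bot (EReal.coe_ne_bot _), top_le_iff] at h
  exact (EReal.add_lt_top hw (EReal.coe_ne_top _)).ne h

theorem IsProxPt.isMinOn_toReal {ψ : V → EReal} {t : ℝ} {v p : V} (hp : IsProxPt ψ t v p)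
    (hbot : ∀ w, ψ w ≠ ⊥) (hpt : ψ p ≠ ⊤) :
    IsMinOn (fun u => (ψ u).toReal + (2 * t)⁻¹ * ‖u - v‖ ^ 2) {u | ψ u ≠ ⊤} p := by
  refine isMinOn_iff.2 fun u hu => ?_
  have h := hp u
  rw [← EReal.coe_toReal hpt (hbot p), ← EReal.coe_toReal hu (hbot u), ← EReal.coe_add,
    ← EReal.coe_add, EReal.coe_le_coe_iff] at h
  simpa [div_eq_inv_mul] using h

variable [InnerProductSpace ℝ V]

theorem EConvex.convexOn_toReal {ψ : V → EReal} (hψ : EConvex ψ) (hbot : ∀ v, ψ v ≠ ⊥) :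
    ConvexOn ℝ {v | ψ v ≠ ⊤} fun v => (ψ v).toReal := by
  have hle : ∀ ⦃u⦄, ψ u ≠ ⊤ → ∀ ⦃v⦄, ψ v ≠ ⊤ → ∀ ⦃a b : ℝ⦄, 0 ≤ a → 0 ≤ b → a + b = 1 →
      ψ (a • u + b • v) ≤ Real.toEReal (a * (ψ u).toReal + b * (ψ v).toReal) := by
    intro u hu v hv a b ha hb hab
    have h := hψ u v a b ha hb hab
    rw [← EReal.coe_toReal hu (hbot u), ← EReal.coe_toReal hv (hbot v)] at h
    exact_mod_cast h
  refine ⟨fun u hu v hv a b ha hb hab => ne_top_of_le_ne_top (EReal.coe_ne_top _)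
    (hle hu hv ha hb hab), fun u hu v hv a b ha hb hab => ?_⟩
  exact (EReal.toReal_le_toReal (hle hu hv ha hb hab) (hbot _) (EReal.coe_ne_top _)).trans_eq
    (EReal.toReal_coe _)

theorem ConvexOn.three_point_of_isMinOn {s : Set V} {g : V → ℝ} (hg : ConvexOn ℝ s g)
    {c : ℝ} {v p z : V} (hmin : IsMinOn (fun u => g u + c * ‖u - v‖ ^ 2) s p) (hp : p ∈ s)
    (hz : z ∈ s) : g p + c * ‖p - v‖ ^ 2 + c * ‖z - p‖ ^ 2 ≤ g z + c * ‖z - v‖ ^ 2 := by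
  -- compare `p` with `(1 - l) • p + l • z`, then let `l → 0`
  have hsmall : ∀ l ∈ Ioo (0:ℝ) 1,
      g p - g z ≤ 2 * c * ⟪p - v, z - p⟫ + l * (c * ‖z - p‖ ^ 2) := by
    rintro l ⟨hl0, hl1⟩
    have hconv := hg.2 hp hz (sub_nonneg.2 hl1.le) hl0.le (sub_add_cancel 1 l)
    have hm := isMinOn_iff.1 hmin _ (hg.1 hp hz (sub_nonneg.2 hl1.le) hl0.le (sub_add_cancel 1 l))
    have hnorm : ‖(1 - l) • p + l • z - v‖ ^ 2
        = ‖p - v‖ ^ 2 + 2 * l * ⟪p - v, z - p⟫ + l ^ 2 * ‖z - p‖ ^ 2 := by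
      rw [show (1 - l) • p + l • z - v = (p - v) + l • (z - p) by module, norm_add_sq_real,
        inner_smul_right, norm_smul, Real.norm_of_nonneg hl0.le]
      ring
    simp only [hnorm, smul_eq_mul] at hm hconv
    refine le_of_mul_le_mul_left ?_ hl0
    nlinarith
  have hlim : Tendsto (fun l : ℝ => 2 * c * ⟪p - v, z - p⟫ + l * (c * ‖z - p‖ ^ 2)) (𝓝[>] 0)
      (𝓝 (2 * c * ⟪p - v, z - p⟫)) := by
    refine tendsto_nhdsWithin_of_tendsto_nhds ?_
    simpa using (Continuous.tendsto (by fun_prop) (0:ℝ) :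
      Tendsto (fun l : ℝ => 2 * c * ⟪p - v, z - p⟫ + l * (c * ‖z - p‖ ^ 2)) _ _)
  have hlin := ge_of_tendsto hlim (eventually_of_mem (Ioo_mem_nhdsGT zero_lt_one) hsmall)
  rw [show z - v = (z - p) + (p - v) by abel, norm_add_sq_real, real_inner_comm]
  linarith

section

variable [CompleteSpace V]

theorem hasDerivAt_comp_lineMap {φ : V → ℝ} {g a b : V} {s : ℝ}
    (h : HasGradientAt φ g (AffineMap.lineMap a b s)) :
    HasDerivAt (fun r : ℝ => φ (AffineMap.lineMap a b r)) ⟪g, b - a⟫ s := by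
  have hline : HasDerivAt (fun r : ℝ => AffineMap.lineMap a b r) (b - a) s := by
    simpa [AffineMap.lineMap_apply_module'] using
      ((hasDerivAt_id s).smul_const (b - a)).add_const a
  simpa [InnerProductSpace.toDual_apply_apply, Function.comp_def] using
    h.hasFDerivAt.comp_hasDerivAt s hline

theorem ConvexOn.add_inner_sub_le_of_hasGradientAt {φ : V → ℝ} {g a : V}
    (hφ : ConvexOn ℝ univ φ) (hg : HasGradientAt φ g a) (z : V) :
    φ a + ⟪g, z - a⟫ ≤ φ z := by
  have hslope := (hφ.comp_affineMap (AffineMap.lineMap a z)).le_slope_of_hasDerivAt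
    (mem_univ 0) (mem_univ 1) one_pos (hasDerivAt_comp_lineMap (by simpa using hg))
  simp only [slope_def_field, Function.comp_apply, AffineMap.lineMap_apply_zero,
    AffineMap.lineMap_apply_one, sub_zero, div_one] at hslope
  linarith

theorem le_add_inner_add_sq_of_lipschitz_gradient {φ : V → ℝ} {φ' : V → V} {L : ℝ}
    (hφ : ∀ v, HasGradientAt φ (φ' v) v) (hlip : ∀ u v, ‖φ' u - φ' v‖ ≤ L * ‖u - v‖)
    (a b : V) : φ b ≤ φ a + ⟪φ' a, b - a⟫ + L / 2 * ‖b - a‖ ^ 2 := by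
  -- the gap between `φ` and its quadratic upper model along the segment is antitone
  set gap : ℝ → ℝ := fun r =>
    φ (AffineMap.lineMap a b r) - r * ⟪φ' a, b - a⟫ - L / 2 * r ^ 2 * ‖b - a‖ ^ 2
  have hgap : ∀ r, HasDerivAt gap
      (⟪φ' (AffineMap.lineMap a b r) - φ' a, b - a⟫ - L * r * ‖b - a‖ ^ 2) r := by
    intro r
    have := ((hasDerivAt_comp_lineMap (a := a) (b := b) (hφ _)).sub
      ((hasDerivAt_id r).mul_const ⟪φ' a, b - a⟫)).sub
        (((hasDerivAt_pow 2 r).const_mul (L / 2)).mul_const (‖b - a‖ ^ 2))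
    refine this.congr_deriv ?_
    simp only [inner_sub_left]
    ring
  have hanti : AntitoneOn gap (Ici 0) := by
    refine antitoneOn_of_hasDerivWithinAt_nonpos (convex_Ici 0)
      (fun r _ => (hgap r).continuousAt.continuousWithinAt)
      (fun r _ => (hgap r).hasDerivWithinAt) fun r hr => ?_
    rw [interior_Ici, mem_Ioi] at hr
    have hdist : ‖φ' (AffineMap.lineMap a b r) - φ' a‖ ≤ L * (r * ‖b - a‖) := by
      simpa [← vsub_eq_sub, AffineMap.lineMap_vsub_left, norm_smul, abs_of_pos hr] using
        hlip (AffineMap.lineMap a b r) a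
    nlinarith [real_inner_le_norm (φ' (AffineMap.lineMap a b r) - φ' a) (b - a),
      norm_nonneg (b - a)]
  have := hanti (mem_Ici.2 le_rfl) (mem_Ici.2 zero_le_one) zero_le_one
  simp only [gap, AffineMap.lineMap_apply_zero, AffineMap.lineMap_apply_one] at this
  linarith

theorem fista_step_le {φ ψ : V → ℝ} {φ' : V → V} {D : Set V} {L : ℝ} (hL : 0 < L)
    (hφd : ∀ v, HasGradientAt φ (φ' v) v) (hφc : ConvexOn ℝ univ φ)
    (hlip : ∀ u v, ‖φ' u - φ' v‖ ≤ L * ‖u - v‖) (hψ : ConvexOn ℝ D ψ) {y p z : V}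
    (hprox : IsMinOn (fun u => ψ u + L / 2 * ‖u - (y - (1 / L) • φ' y)‖ ^ 2) D p)
    (hp : p ∈ D) (hz : z ∈ D) :
    φ p + ψ p + L / 2 * ‖z - p‖ ^ 2 ≤ φ z + ψ z + L / 2 * ‖z - y‖ ^ 2 := by
  have hexpand : ∀ u, L / 2 * ‖u - (y - (1 / L) • φ' y)‖ ^ 2
      = L / 2 * ‖u - y‖ ^ 2 + ⟪φ' y, u - y⟫ + ‖φ' y‖ ^ 2 / (2 * L) := by
    intro u
    rw [show u - (y - (1 / L) • φ' y) = (u - y) + (1 / L) • φ' y by abel, norm_add_sq_real,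
      inner_smul_right, norm_smul, real_inner_comm, Real.norm_of_nonneg (by positivity)]
    field_simp
  have hthree := hψ.three_point_of_isMinOn hprox hp hz
  rw [hexpand, hexpand] at hthree
  have hdescent := le_add_inner_add_sq_of_lipschitz_gradient hφd hlip y p
  have hgrad := hφc.add_inner_sub_le_of_hasGradientAt (hφd y) z
  linarith

theorem IsProxPt.fista_step_le {φ : V → ℝ} {φ' : V → V} {L : ℝ} (hL : 0 < L)
    (hφd : ∀ v, HasGradientAt φ (φ' v) v) (hφc : ConvexOn ℝ univ φ)
    (hlip : ∀ u v, ‖φ' u - φ' v‖ ≤ L * ‖u - v‖) {ψ : V → EReal} (hψc : EConvex ψ)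
    (hψp : ProperFn ψ) {y p z : V} (hp : IsProxPt ψ (1 / L) (y - (1 / L) • φ' y) p)
    (hz : ψ z ≠ ⊤) :
    φ p + (ψ p).toReal + L / 2 * ‖z - p‖ ^ 2 ≤ φ z + (ψ z).toReal + L / 2 * ‖z - y‖ ^ 2 := by
  have hprox := hp.isMinOn_toReal hψp.2 (hp.ne_top hψp.1)
  rw [show (2 * (1 / L))⁻¹ = L / 2 by field_simp] at hprox
  exact _root_.fista_step_le hL hφd hφc hlip (hψc.convexOn_toReal hψp.2) hprox (hp.ne_top hψp.1) hz

end

theorem fista_lyapunov_le {D : Set V} {F : V → ℝ} (hF : ConvexOn ℝ D F) {L : ℝ} {θ : ℕ → ℝ}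
    (hθ : IsFistaTheta θ) {x y : ℕ → V} (hy0 : y 0 = x 0)
    (hmom : ∀ k, y (k + 1) = x (k + 1) + ((θ (k + 1) * (1 - θ k)) / θ k) • (x (k + 1) - x k))
    (hxD : ∀ k, x (k + 1) ∈ D)
    (hstep : ∀ k, ∀ z ∈ D,
      F (x (k + 1)) + L / 2 * ‖z - x (k + 1)‖ ^ 2 ≤ F z + L / 2 * ‖z - y k‖ ^ 2)
    {xs : V} (hxs : xs ∈ D) (k : ℕ) :
    F (x (k + 1)) - F xs + L / 2 * θ k ^ 2 * ‖x k + (θ k)⁻¹ • (x (k + 1) - x k) - xs‖ ^ 2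
      ≤ L / 2 * θ k ^ 2 * ‖x 0 - xs‖ ^ 2 := by
  set u : ℕ → V := fun k => x k + (θ k)⁻¹ • (x (k + 1) - x k)
  induction k with
  | zero =>
    have h := hstep 0 xs hxs
    rw [hy0, norm_sub_rev xs, norm_sub_rev xs] at h
    simp only [hθ.zero, inv_one, one_smul, add_sub_cancel, one_pow, mul_one]
    linarith
  | succ n ih =>
    set s := θ n
    set t := θ (n + 1)
    have hs : 0 < s := hθ.pos n
    have ht : 0 < t := hθ.pos (n + 1)
    have ht1 : 0 ≤ 1 - t := sub_nonneg.2 (hθ.succ_mem n).2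
    set z := t • xs + (1 - t) • x (n + 1) with hz
    have hu₁ : u (n + 1) = x (n + 1) + t⁻¹ • (x (n + 2) - x (n + 1)) := rfl
    have hu₀ : u n = x n + s⁻¹ • (x (n + 1) - x n) := rfl
    have hy : y (n + 1) = x (n + 1) + (t * (1 - s) / s) • (x (n + 1) - x n) := hmom n
    have hzD : z ∈ D := hF.1 hxs (hxD n) ht.le ht1 (by ring)
    have hFz : F z ≤ t * F xs + (1 - t) * F (x (n + 1)) := hF.2 hxs (hxD n) ht.le ht1 (by ring)
    have hz₁ : ‖z - x (n + 2)‖ = t * ‖u (n + 1) - xs‖ := by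
      rw [show z - x (n + 2) = t • (xs - u (n + 1)) by
          rw [hz, hu₁]; match_scalars <;> field_simp; ring,
        norm_smul, Real.norm_of_nonneg ht.le, norm_sub_rev]
    have hz₂ : ‖z - y (n + 1)‖ = t * ‖u n - xs‖ := by
      rw [show z - y (n + 1) = t • (xs - u n) by
          rw [hz, hu₀, hy]; match_scalars <;> field_simp <;> ring,
        norm_smul, Real.norm_of_nonneg ht.le, norm_sub_rev]
    have h := hstep (n + 1) z hzD
    rw [hz₁, hz₂, mul_pow, mul_pow] at h
    have ih' : (1 - t) * (F (x (n + 1)) - F xs) + L / 2 * t ^ 2 * ‖u n - xs‖ ^ 2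
        ≤ L / 2 * t ^ 2 * ‖x 0 - xs‖ ^ 2 := by
      rw [hθ.succ_sq n]
      nlinarith [mul_le_mul_of_nonneg_left ih ht1]
    linarith

theorem fista_rate {D : Set V} {F : V → ℝ} (hF : ConvexOn ℝ D F) {L : ℝ} (hL : 0 ≤ L)
    {θ : ℕ → ℝ} (hθ : IsFistaTheta θ) {x y : ℕ → V} (hy0 : y 0 = x 0)
    (hmom : ∀ k, y (k + 1) = x (k + 1) + ((θ (k + 1) * (1 - θ k)) / θ k) • (x (k + 1) - x k))
    (hxD : ∀ k, x (k + 1) ∈ D)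
    (hstep : ∀ k, ∀ z ∈ D,
      F (x (k + 1)) + L / 2 * ‖z - x (k + 1)‖ ^ 2 ≤ F z + L / 2 * ‖z - y k‖ ^ 2)
    {xs : V} (hxs : xs ∈ D) (k : ℕ) :
    F (x (k + 1)) - F xs ≤ 2 * L * ‖x 0 - xs‖ ^ 2 / ((k : ℝ) + 2) ^ 2 := by
  have hlyap := fista_lyapunov_le hF hθ hy0 hmom hxD hstep hxs k
  have hθsq : θ k ^ 2 ≤ 4 / ((k : ℝ) + 2) ^ 2 := by
    have := pow_le_pow_left₀ (hθ.pos k).le (hθ.le_two_div k) 2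
    rwa [div_pow, show (2 : ℝ) ^ 2 = 4 by norm_num] at this
  calc F (x (k + 1)) - F xs ≤ L / 2 * θ k ^ 2 * ‖x 0 - xs‖ ^ 2 := by
        nlinarith [mul_nonneg (mul_nonneg hL (sq_nonneg (θ k)))
          (sq_nonneg ‖x k + (θ k)⁻¹ • (x (k + 1) - x k) - xs‖)]
    _ ≤ L / 2 * (4 / ((k : ℝ) + 2) ^ 2) * ‖x 0 - xs‖ ^ 2 := by gcongr
    _ = 2 * L * ‖x 0 - xs‖ ^ 2 / ((k : ℝ) + 2) ^ 2 := by ring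

end

theorem Metric.le_infDist_sq {α : Type*} [PseudoMetricSpace α] {s : Set α} {x : α} {a : ℝ}
    (hs : s.Nonempty) (h : ∀ y ∈ s, a ≤ dist x y ^ 2) : a ≤ infDist x s ^ 2 :=
  (Real.sqrt_le_iff.1 ((le_infDist hs).2 fun y hy => Real.sqrt_le_iff.2 ⟨dist_nonneg, h y hy⟩)).2

theorem accel_prox_grad_rate_general (φ : E → ℝ) (φ' : E → E)
    (hφd : ∀ v, HasGradientAt φ (φ' v) v) (hφc : ConvexOn ℝ Set.univ φ)
    (L : ℝ) (hL : 0 < L) (hlip : ∀ u v : E, ‖φ' u - φ' v‖ ≤ L * ‖u - v‖)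
    (ψ : E → EReal) (hψc : EConvex ψ) (hψp : ProperFn ψ)
    (f : E → EReal) (hf : ∀ v, f v = ((φ v : ℝ) : EReal) + ψ v)
    (fbar : ℝ) (Xbar : Set E) (hXbar : Xbar = {v : E | f v = ((fbar : ℝ) : EReal)})
    (hne : Xbar.Nonempty)
    (θ : ℕ → ℝ) (hθ0 : θ 0 = 1) (hθmem : ∀ k, θ (k+1) ∈ Set.Ioc (0:ℝ) 1)
    (hθrec : ∀ k, (θ (k+1))^2 = (θ k)^2 * (1 - θ (k+1)))
    (x y : ℕ → E) (hy0 : y 0 = x 0)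
    (hstep : ∀ k : ℕ, IsProxPt ψ (1/L) (y k - (1/L) • φ' (y k)) (x (k+1)))
    (hmom : ∀ k : ℕ,
      y (k+1) = x (k+1) + ((θ (k+1) * (1 - θ k)) / θ k) • (x (k+1) - x k)) :
    ∀ k : ℕ, 1 ≤ k →
      f (x k) ≤
        ((fbar + 2 * L * (Metric.infDist (x 0) Xbar)^2 / ((k:ℝ) + 1)^2 : ℝ) : EReal) := by
  intro k hk
  obtain ⟨m, rfl⟩ : ∃ m, k = m + 1 := ⟨k - 1, by omega⟩
  set D := {v | ψ v ≠ ⊤}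
  set F : E → ℝ := fun v => φ v + (ψ v).toReal
  have hF : ConvexOn ℝ D F :=
    (hφc.subset (subset_univ D) (hψc.convexOn_toReal hψp.2).1).add (hψc.convexOn_toReal hψp.2)
  have hfF : ∀ v ∈ D, f v = F v := fun v hv => by
    rw [hf, ← EReal.coe_toReal hv (hψp.2 v), EReal.coe_add]
  have hxD : ∀ k, x (k + 1) ∈ D := fun k => (hstep k).ne_top hψp.1
  have hrate : ∀ xs ∈ Xbar, (F (x (m + 1)) - fbar) * ((m : ℝ) + 2) ^ 2 / (2 * L)
      ≤ dist (x 0) xs ^ 2 := by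
    intro xs hxs
    have hfxs : f xs = fbar := by rwa [hXbar] at hxs
    have hxsD : xs ∈ D := fun htop => by simp [hf, htop] at hfxs
    have hFxs : F xs = fbar := by exact_mod_cast (hfF xs hxsD).symm.trans hfxs
    have := fista_rate hF hL.le ⟨hθ0, hθmem, hθrec⟩ hy0 hmom hxD
      (fun k z hz => (hstep k).fista_step_le hL hφd hφc hlip hψc hψp hz) hxsD m
    rw [hFxs, le_div_iff₀ (by positivity)] at this
    rw [div_le_iff₀ (by positivity), dist_eq_norm]
    linarith
  have hdist := Metric.le_infDist_sq hne hrate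
  rw [div_le_iff₀ (by positivity)] at hdist
  rw [hfF _ (hxD m), EReal.coe_le_coe_iff, ← sub_le_iff_le_add', le_div_iff₀ (by positivity)]
  push_cast
  linarith

/-- `O(1/k²)` convergence rate of the accelerated proximal gradient (FISTA) method. -/
theorem accel_prox_grad_rate (φ : E → ℝ) (φ' : E → E)
    (hφd : ∀ v, HasGradientAt φ (φ' v) v) (hφc : ConvexOn ℝ Set.univ φ)
    (L : ℝ) (hL : 0 < L) (hlip : ∀ u v : E, ‖φ' u - φ' v‖ ≤ L * ‖u - v‖)
    (ψ : E → EReal) (hψc : EConvex ψ) (hψp : ProperFn ψ) (hψlsc : LowerSemicontinuous ψ)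
    (f : E → EReal) (hf : ∀ v, f v = ((φ v : ℝ) : EReal) + ψ v)
    (fbar : ℝ) (Xbar : Set E) (hXbar : Xbar = {v : E | f v = ((fbar : ℝ) : EReal)})
    (hne : Xbar.Nonempty) (hmin : ∀ v : E, ((fbar : ℝ) : EReal) ≤ f v)
    (θ : ℕ → ℝ) (hθ0 : θ 0 = 1) (hθmem : ∀ k, θ (k+1) ∈ Set.Ioc (0:ℝ) 1)
    (hθrec : ∀ k, (θ (k+1))^2 = (θ k)^2 * (1 - θ (k+1)))
    (x y : ℕ → E) (hy0 : y 0 = x 0)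
    (hstep : ∀ k : ℕ, IsProxPt ψ (1/L) (y k - (1/L) • φ' (y k)) (x (k+1)))
    (hmom : ∀ k : ℕ,
      y (k+1) = x (k+1) + ((θ (k+1) * (1 - θ k)) / θ k) • (x (k+1) - x k)) :
    ∀ k : ℕ, 1 ≤ k →
      f (x k) ≤
        ((fbar + 2 * L * (Metric.infDist (x 0) Xbar)^2 / ((k:ℝ) + 1)^2 : ℝ) : EReal) :=
  accel_prox_grad_rate_general φ φ' hφd hφc L hL hlip ψ hψc hψp f hf fbar Xbar hXbar hne θ hθ0 hθmem
    hθrec x y hy0 hstep hmom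
end

section
/- Consequence of the proximal subgradient bound: under the hypotheses of Proposition 1, for every x ∈ ℝⁿ, (∑_{i=0}^{k} t_i(φ(x_i)+ψ(x_{i+1})) − ½∑_{i=0}^{k} t_i²‖g_i^φ‖²)/(∑_{i=0}^{k} t_i) ≤ f(x) + ‖x₀ − x‖²/(2∑_{i=0}^{k} t_i). -/
open scoped RealInnerProductSpace

variable {E : Type*} [NormedAddCommGroup E] [InnerProductSpace ℝ E] [FiniteDimensional ℝ E]

/-!
Write `x_{i+1} = x_i - t_i (g^φ_i + g^ψ_i)`. Expanding `‖x_{i+1} - w‖²`, the subgradient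
inequalities for `φ` at `x_i` and for `ψ` at `x_{i+1}` give
`t_i (φ(x_i) + ψ(x_{i+1}) - f(w)) ≤ ½‖x_i - w‖² - ½‖x_{i+1} - w‖² + ½ t_i² ‖g^φ_i‖²`,
the leftover term `½ t_i² ‖g^ψ_i‖²` having the right sign. Summing over `i` telescopes.
When `ψ(w) = ⊤` the bound is trivial; otherwise the subgradient inequality makes every
`ψ(x_{i+1})` finite and the argument is real arithmetic.
-/

omit [FiniteDimensional ℝ E] in
lemma inner_le_half_sq_sub_half_sq (u w a b : E) (t : ℝ) :
    t * ⟪a, u - w⟫ + t * ⟪b, u - t • (a + b) - w⟫ ≤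
      ‖u - w‖ ^ 2 / 2 - ‖u - t • (a + b) - w‖ ^ 2 / 2 + t ^ 2 * ‖a‖ ^ 2 / 2 := by
  have hslack : ‖u - w‖ ^ 2 / 2 - ‖u - t • (a + b) - w‖ ^ 2 / 2 + t ^ 2 * ‖a‖ ^ 2 / 2
      - (t * ⟪a, u - w⟫ + t * ⟪b, u - t • (a + b) - w⟫) = t ^ 2 * ‖b‖ ^ 2 / 2 := by
    simp only [← real_inner_self_eq_norm_sq, inner_sub_left, inner_sub_right, inner_add_left,
      inner_add_right, real_inner_smul_left, real_inner_smul_right]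
    linear_combination (-(t / 2)) * (real_inner_comm u a) + (-(t / 2)) * (real_inner_comm u b) +
      (-(t / 2)) * (real_inner_comm a w) + (-(t / 2)) * (real_inner_comm b w) +
      (-(t ^ 2 / 2)) * (real_inner_comm b a)
  linarith [mul_nonneg (sq_nonneg t) (sq_nonneg ‖b‖)]

omit [FiniteDimensional ℝ E] in
lemma forward_backward_step_le {u w a b : E} {t p q P Q : ℝ} (ht : 0 ≤ t)
    (hp : p + ⟪a, w - u⟫ ≤ P) (hq : q + ⟪b, w - (u - t • (a + b))⟫ ≤ Q) :
    t * (p + q) ≤ t * (P + Q) + ‖u - w‖ ^ 2 / 2 - ‖u - t • (a + b) - w‖ ^ 2 / 2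
      + t ^ 2 * ‖a‖ ^ 2 / 2 := by
  have hthree := inner_le_half_sq_sub_half_sq u w a b t
  rw [← neg_sub u w, inner_neg_right] at hp
  rw [← neg_sub, inner_neg_right] at hq
  nlinarith [mul_le_mul_of_nonneg_left hp ht, mul_le_mul_of_nonneg_left hq ht]

lemma sum_range_le_of_le_telescope {c d e : ℕ → ℝ} {C : ℝ} (t : ℕ → ℝ) (hd : ∀ i, 0 ≤ d i)
    (h : ∀ i, c i ≤ t i * C + d i - d (i + 1) + e i) (n : ℕ) :
    ∑ i ∈ Finset.range n, c i ≤ (∑ i ∈ Finset.range n, t i) * C + d 0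
      + ∑ i ∈ Finset.range n, e i := by
  calc ∑ i ∈ Finset.range n, c i
      ≤ ∑ i ∈ Finset.range n, (t i * C + (d i - d (i + 1)) + e i) :=
        Finset.sum_le_sum fun i _ => by linarith [h i]
    _ = (∑ i ∈ Finset.range n, t i) * C + (d 0 - d n) + ∑ i ∈ Finset.range n, e i := by
        rw [Finset.sum_add_distrib, Finset.sum_add_distrib, ← Finset.sum_mul,
          Finset.sum_range_sub']
    _ ≤ _ := by linarith [hd n]

lemma EReal.coe_finset_sum {ι : Type*} (s : Finset ι) (f : ι → ℝ) :
    ((∑ i ∈ s, f i : ℝ) : EReal) = ∑ i ∈ s, (f i : EReal) :=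
  map_sum (⟨⟨Real.toEReal, EReal.coe_zero⟩, EReal.coe_add⟩ : ℝ →+ EReal) f s

omit [FiniteDimensional ℝ E] in
lemma ne_top_of_mem_subgradAt {ψ : E → EReal} {g p y : E} (hg : g ∈ SubgradAt ψ p) (hy : ψ y ≠ ⊤) :
    ψ p ≠ ⊤ := by
  intro hp
  have := hg y
  rw [hp, EReal.top_add_coe, top_le_iff] at this
  exact hy this

theorem prox_subgrad_bound_consequence_general (φ : E → ℝ)
    (ψ : E → EReal) (hψp : ProperFn ψ)
    (f : E → EReal) (hf : ∀ v, f v = ((φ v : ℝ) : EReal) + ψ v)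
    (t : ℕ → ℝ) (ht : ∀ k, 0 < t k)
    (x g gφ gψ : ℕ → E)
    (hgφ : ∀ k, gφ k ∈ RSubgradAt φ (x k))
    (hgψ : ∀ k, gψ k ∈ SubgradAt ψ (x (k+1)))
    (hg : ∀ k, g k = gφ k + gψ k)
    (hx : ∀ k, x (k+1) = x k - t k • g k) :
    ∀ k : ℕ, ∀ w : E,
      ((∑ i ∈ Finset.range (k+1), (((t i : ℝ) : EReal) *
            (((φ (x i) : ℝ) : EReal) + ψ (x (i+1))))) -
          ((1/2 * ∑ i ∈ Finset.range (k+1), (t i)^2 * ‖gφ i‖^2 : ℝ) : EReal)) /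
          (((∑ i ∈ Finset.range (k+1), t i : ℝ)) : EReal)
        ≤ f w + ((‖x 0 - w‖^2 / (2 * ∑ i ∈ Finset.range (k+1), t i) : ℝ) : EReal) := by
  intro k w
  by_cases hw : ψ w = ⊤
  · simp [hf, hw]
  obtain ⟨Q, hQ⟩ : ∃ Q : ℝ, ψ w = Q := ⟨_, (EReal.coe_toReal hw (hψp.2 w)).symm⟩
  obtain ⟨q, hq⟩ : ∃ q : ℕ → ℝ, ∀ i, ψ (x (i + 1)) = q i :=
    ⟨_, fun i => (EReal.coe_toReal (ne_top_of_mem_subgradAt (hgψ i) hw) (hψp.2 _)).symm⟩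
  have hstep : ∀ i, t i * (φ (x i) + q i) ≤ t i * (φ w + Q)
      + ‖x i - w‖ ^ 2 / 2 - ‖x (i + 1) - w‖ ^ 2 / 2 + t i ^ 2 * ‖gφ i‖ ^ 2 / 2 := fun i => by
    have hψi : q i + ⟪gψ i, w - x (i + 1)⟫ ≤ Q := by
      simpa only [hq, hQ, ← EReal.coe_add, EReal.coe_le_coe_iff] using hgψ i w
    rw [hx, hg] at hψi ⊢
    exact forward_backward_step_le (ht i).le (hgφ i w) hψi
  have hsum := sum_range_le_of_le_telescope t (fun i => by positivity) hstep (k + 1)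
  have hT : 0 < ∑ i ∈ Finset.range (k + 1), t i := Finset.sum_pos (fun i _ => ht i) (by simp)
  simp only [hf, hq, hQ, ← EReal.coe_add, ← EReal.coe_mul, ← EReal.coe_finset_sum,
    ← EReal.coe_sub, ← EReal.coe_div, EReal.coe_le_coe_iff]
  set T := ∑ i ∈ Finset.range (k + 1), t i
  have hdist : ‖x 0 - w‖ ^ 2 / (2 * T) * T = ‖x 0 - w‖ ^ 2 / 2 := by field_simp
  rw [div_le_iff₀ hT, add_mul, hdist]
  rw [← Finset.sum_div] at hsum
  linarith

/-- Consequence of Proposition 1: the averaged bound against any comparison point. -/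
theorem prox_subgrad_bound_consequence (φ : E → ℝ) (hφc : ConvexOn ℝ Set.univ φ)
    (ψ : E → EReal) (hψc : EConvex ψ) (hψp : ProperFn ψ) (hψlsc : LowerSemicontinuous ψ)
    (f : E → EReal) (hf : ∀ v, f v = ((φ v : ℝ) : EReal) + ψ v)
    (t : ℕ → ℝ) (ht : ∀ k, 0 < t k)
    (x g gφ gψ : ℕ → E)
    (hgφ : ∀ k, gφ k ∈ RSubgradAt φ (x k))
    (hprox : ∀ k, IsProxPt ψ (t k) (x k - t k • gφ k) (x (k+1)))
    (hgψ : ∀ k, gψ k ∈ SubgradAt ψ (x (k+1)))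
    (hg : ∀ k, g k = gφ k + gψ k)
    (hx : ∀ k, x (k+1) = x k - t k • g k) :
    ∀ k : ℕ, ∀ w : E,
      ((∑ i ∈ Finset.range (k+1), (((t i : ℝ) : EReal) *
            (((φ (x i) : ℝ) : EReal) + ψ (x (i+1))))) -
          ((1/2 * ∑ i ∈ Finset.range (k+1), (t i)^2 * ‖gφ i‖^2 : ℝ) : EReal)) /
          (((∑ i ∈ Finset.range (k+1), t i : ℝ)) : EReal)
        ≤ f w + ((‖x 0 - w‖^2 / (2 * ∑ i ∈ Finset.range (k+1), t i) : ℝ) : EReal) :=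
  prox_subgrad_bound_consequence_general φ ψ hψp f hf t ht x g gφ gψ hgφ hgψ hg hx
end
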